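/- Let a_{i,j} (1 ≤ i < j ≤ 2n) be commuting indeterminates, extended symmetrically by a_{j,i} = a_{i,j}, and let pf_{2n} be the Pfaffian polynomial of the symmetric array. Then pf_{2n} is invariant under the reflection τ fixing 1 and sending i ↦ 2n+2−i for 2 ≤ i ≤ 2n. -/

import Mathlib

open Finset MvPolynomial

/-- The set of Pfaff permutations of `{0, ..., 2n-1}`. -/
def pfaffPerms (n : ℕ) : Finset (Equiv.Perm (Fin (2*n))) :=
  Finset.univ.filter fun σ =>
    (∀ k : Fin n, σ ⟨2*k.1, by have := k.2; omega⟩ < σ ⟨2*k.1+1, by have := k.2; omega⟩) ∧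
    ∀ k l : Fin n, k < l →
      σ ⟨2*k.1, by have := k.2; omega⟩ < σ ⟨2*l.1, by have := l.2; omega⟩

/-- The Pfaffian polynomial in symmetric commuting indeterminates `a i j = a j i`,
realized as a multivariate polynomial whose variables are indexed by unordered pairs
`Sym2 (Fin (2n))` (so that the symmetry `a i j = a j i` holds by construction):
`pf₂ₙ = Σ_{α ∈ S₂ₙ,pf} sign α · a_{i₁j₁} ⋯ a_{iₙjₙ}`. -/
noncomputable def pfPoly (n : ℕ) (K : Type*) [CommRing K] :
    MvPolynomial (Sym2 (Fin (2*n))) K :=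
  ∑ σ ∈ pfaffPerms n,
    ((Equiv.Perm.sign σ : ℤ) : MvPolynomial (Sym2 (Fin (2*n))) K) *
      ∏ k : Fin n,
        X (s(σ ⟨2*k.1, by have := k.2; omega⟩, σ ⟨2*k.1+1, by have := k.2; omega⟩))

instance (m : ℕ) : NeZero (2*(m+1)) := ⟨by omega⟩

namespace PfRefl

open Equiv Equiv.Perm

variable {n : ℕ}

/-- first element of the `k`-th block -/
def ii (k : Fin n) : Fin (2*n) := ⟨2*k.1, by have := k.2; omega⟩

/-- second element of the `k`-th block -/
def jj (k : Fin n) : Fin (2*n) := ⟨2*k.1+1, by have := k.2; omega⟩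

lemma ii_inj : Function.Injective (ii (n := n)) := by
  intro a b h
  simp only [ii, Fin.mk.injEq] at h
  exact Fin.ext (by omega)

lemma mem_pfaff {σ : Perm (Fin (2*n))} :
    σ ∈ pfaffPerms n ↔ (∀ k : Fin n, σ (ii k) < σ (jj k)) ∧
      ∀ k l : Fin n, k < l → σ (ii k) < σ (ii l) := by
  simp [pfaffPerms, ii, jj]

lemma exists_ii_jj (x : Fin (2*n)) : (∃ k, x = ii k) ∨ ∃ k, x = jj k := by
  rcases Nat.even_or_odd x.1 with ⟨c, hc⟩ | ⟨c, hc⟩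
  · exact Or.inl ⟨⟨c, by have := x.2; omega⟩, Fin.ext (by simp [ii]; omega)⟩
  · exact Or.inr ⟨⟨c, by have := x.2; omega⟩, Fin.ext (by simp [jj]; omega)⟩

/-- the pairing equivalence -/
def pe (n : ℕ) : Fin n × Fin 2 ≃ Fin (2*n) := finProdFinEquiv.trans (finCongr (mul_comm n 2))

lemma pe_apply (k : Fin n) (r : Fin 2) : pe n (k, r) = ⟨r.1 + 2*k.1, by omega⟩ := rfl

lemma pe_zero (k : Fin n) : pe n (k, 0) = ii k := by
  rw [pe_apply]; exact Fin.ext (by simp [ii])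

lemma pe_one (k : Fin n) : pe n (k, 1) = jj k := by
  rw [pe_apply]; exact Fin.ext (by simp [jj]; omega)

/-- an element of the hyperoctahedral group: permute the blocks by `f`,
and permute within the `k`-th block by `u k`. -/
def hyper (f : Perm (Fin n)) (u : Fin n → Perm (Fin 2)) : Perm (Fin (2*n)) :=
  (pe n).permCongr ((Equiv.prodCongrLeft fun _ => f) * (Equiv.prodCongrRight u))

lemma hyper_apply (f : Perm (Fin n)) (u : Fin n → Perm (Fin 2)) (k : Fin n) (r : Fin 2) :
    hyper f u (pe n (k, r)) = pe n (f k, u k r) := by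
  simp [hyper, Equiv.permCongr_apply, Equiv.Perm.mul_apply]

lemma sign_hyper (f : Perm (Fin n)) (u : Fin n → Perm (Fin 2)) :
    sign (hyper f u) = ∏ k, sign (u k) := by
  rw [hyper, Equiv.Perm.sign_permCongr, map_mul, sign_prodCongrLeft, sign_prodCongrRight]
  simp [Finset.prod_const, ← pow_two, Int.units_sq]

/-- negation as a permutation -/
def negP (n : ℕ) [NeZero n] : Perm (Fin n) := Equiv.neg (Fin n)

lemma negP_apply [NeZero n] (x : Fin n) : negP n x = -x := rfl

section NegFacts

variable (m : ℕ)

local notation "N" => 2*(m+1)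

lemma val_neg_of_ne_zero {a : Fin (N)} (ha : a ≠ 0) : (-a).1 = N - a.1 := by
  have h0 : a.1 ≠ 0 := fun h => ha (Fin.ext (by simpa using h))
  have h2 := a.2
  rw [Fin.neg_def]
  exact Nat.mod_eq_of_lt (by omega)

lemma neg_lt_neg_of_lt {a b : Fin (N)} (h0 : a ≠ 0) (hab : a < b) : -b < -a := by
  have hb : b ≠ 0 := by
    intro h; subst h
    exact absurd (Fin.zero_le a) (not_le_of_gt hab)
  rw [Fin.lt_def, val_neg_of_ne_zero m h0, val_neg_of_ne_zero m hb]
  rw [Fin.lt_def] at hab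
  have := b.2
  have h0' : a.1 ≠ 0 := fun h => h0 (Fin.ext (by simpa using h))
  omega

lemma neg_pos_of_ne_zero {a : Fin (N)} (ha : a ≠ 0) : 0 < -a := by
  have : (-a) ≠ 0 := fun h => ha (by simpa using congrArg Neg.neg h)
  exact Fin.pos_of_ne_zero this

/-- the `i`-th transposition `(i+1, -(i+1))` used to build up negation -/
def F (i : ℕ) : Perm (Fin (N)) :=
  if h : i < m then Equiv.swap (⟨i+1, by omega⟩ : Fin (N)) ⟨N - (i+1), by omega⟩ else 1

lemma F_prefix_apply (j : ℕ) : ∀ x : Fin (N), j ≤ m →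
    ((((List.range j).map (F m))).prod x).1 =
      if 1 ≤ x.1 ∧ x.1 ≤ j ∨ N - j ≤ x.1 then N - x.1 else x.1 := by
  induction j with
  | zero =>
    intro x _
    simp only [List.range_zero, List.map_nil, List.prod_nil, Equiv.Perm.one_apply]
    have := x.2
    split_ifs <;> omega
  | succ j ih =>
    intro x hj
    have hj' : j ≤ m := by omega
    rw [List.range_succ, List.map_append, List.prod_append]
    simp only [List.map_cons, List.map_nil, List.prod_cons, List.prod_nil, mul_one,
      Equiv.Perm.mul_apply]
    rw [F, dif_pos (by omega : j < m)]
    have hx2 := x.2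
    rcases eq_or_ne x (⟨j+1, by omega⟩ : Fin (N)) with h | hx1
    · rw [h, Equiv.swap_apply_left, ih _ hj']
      simp only [Fin.val_mk]
      split_ifs <;> omega
    · rcases eq_or_ne x (⟨N-(j+1), by omega⟩ : Fin (N)) with h | hx1'
      · rw [h, Equiv.swap_apply_right, ih _ hj']
        simp only [Fin.val_mk]
        split_ifs <;> omega
      · rw [Equiv.swap_apply_of_ne_of_ne hx1 hx1', ih _ hj']
        have hnx : x.1 ≠ j+1 := fun h => hx1 (Fin.ext (by simpa using h))
        have hnx2 : x.1 ≠ N-(j+1) := fun h => hx1' (Fin.ext (by simpa using h))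
        split_ifs <;> omega

lemma F_prod : (((List.range m).map (F m))).prod = negP (N) := by
  ext x
  rw [negP_apply]
  rw [F_prefix_apply m m x le_rfl]
  by_cases hx : x = 0
  · subst hx
    rw [show ((-0 : Fin (N))).1 = 0 by simp]
    split_ifs with h <;> simp only [Fin.val_zero] at h ⊢ <;> omega
  · rw [val_neg_of_ne_zero m hx]
    have h0 : x.1 ≠ 0 := fun h => hx (Fin.ext (by simpa using h))
    have := x.2
    split_ifs with h
    · rfl
    · omega

lemma sign_negP : sign (negP (N)) = (-1) ^ m := by
  rw [← F_prod]
  rw [Equiv.Perm.sign_prod_list_swap]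
  · simp
  · intro g hg
    simp only [List.mem_map, List.mem_range] at hg
    obtain ⟨i, hi, rfl⟩ := hg
    rw [F, dif_pos hi]
    exact ⟨_, _, by simp only [ne_eq, Fin.mk.injEq]; omega, rfl⟩

end NegFacts

section Main

variable (m : ℕ) {K : Type*} [CommRing K]

local notation "N" => 2*(m+1)
local notation "n" => m+1

/-- the within-block swaps performed at every block except block `0` -/
def uW : Fin (n) → Perm (Fin 2) := fun k => if k = 0 then 1 else Equiv.swap 0 1

lemma prod_sign_uW : (∏ k, sign (uW m k)) = (-1) ^ m := by
  rw [← Finset.mul_prod_erase Finset.univ _ (Finset.mem_univ (0 : Fin (n)))]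
  rw [Finset.prod_congr rfl (fun k hk => by
    rw [show uW m k = Equiv.swap 0 1 by
      simp only [uW, if_neg (Finset.ne_of_mem_erase hk)]])]
  simp only [uW, if_pos rfl, map_one, one_mul]
  rw [Finset.prod_const, Equiv.Perm.sign_swap (by decide)]
  congr 1
  rw [Finset.card_erase_of_mem (Finset.mem_univ _)]
  simp

/-- first stage: compose with negation and swap within all blocks except block 0 -/
noncomputable def step1 (σ : Perm (Fin (N))) : Perm (Fin (N)) :=
  negP (N) * σ * hyper 1 (uW m)

/-- the normalization map: `Φ σ` is the Pfaff permutation whose matching is the image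
of the matching of `σ` under negation. -/
noncomputable def Φ (σ : Perm (Fin (N))) : Perm (Fin (N)) :=
  step1 m σ * hyper (Tuple.sort fun k => step1 m σ (ii k)) 1

lemma step1_ii_zero (σ : Perm (Fin (N))) : step1 m σ (ii 0) = - σ (ii 0) := by
  rw [step1, Equiv.Perm.mul_apply, Equiv.Perm.mul_apply, ← pe_zero, hyper_apply]
  simp only [uW, if_pos rfl, Equiv.Perm.one_apply, pe_zero]
  rfl

lemma step1_jj_zero (σ : Perm (Fin (N))) : step1 m σ (jj 0) = - σ (jj 0) := by
  rw [step1, Equiv.Perm.mul_apply, Equiv.Perm.mul_apply, ← pe_one, hyper_apply]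
  simp only [uW, if_pos rfl, Equiv.Perm.one_apply, pe_one]
  rfl

lemma step1_ii (σ : Perm (Fin (N))) (k : Fin (n)) (hk : k ≠ 0) :
    step1 m σ (ii k) = - σ (jj k) := by
  rw [step1, Equiv.Perm.mul_apply, Equiv.Perm.mul_apply, ← pe_zero, hyper_apply]
  simp only [uW, if_neg hk, Equiv.Perm.one_apply, Equiv.swap_apply_left, pe_one]
  rfl

lemma step1_jj (σ : Perm (Fin (N))) (k : Fin (n)) (hk : k ≠ 0) :
    step1 m σ (jj k) = - σ (ii k) := by
  rw [step1, Equiv.Perm.mul_apply, Equiv.Perm.mul_apply, ← pe_one, hyper_apply]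
  simp only [uW, if_neg hk, Equiv.Perm.one_apply, Equiv.swap_apply_right, pe_zero]
  rfl

lemma Φ_ii (σ : Perm (Fin (N))) (k : Fin (n)) :
    Φ m σ (ii k) = step1 m σ (ii (Tuple.sort (fun k => step1 m σ (ii k)) k)) := by
  rw [Φ, Equiv.Perm.mul_apply, ← pe_zero, hyper_apply]
  simp [pe_zero]

lemma Φ_jj (σ : Perm (Fin (N))) (k : Fin (n)) :
    Φ m σ (jj k) = step1 m σ (jj (Tuple.sort (fun k => step1 m σ (ii k)) k)) := by
  rw [Φ, Equiv.Perm.mul_apply, ← pe_one, hyper_apply]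
  simp [pe_one]

-- facts about a Pfaff permutation
lemma pfaff_apply_zero {σ : Perm (Fin (N))} (hσ : σ ∈ pfaffPerms (n)) : σ (ii 0) = 0 := by
  rw [mem_pfaff] at hσ
  have hle : ∀ y : Fin (N), σ (ii 0) ≤ σ y := by
    intro y
    rcases exists_ii_jj y with ⟨k, rfl⟩ | ⟨k, rfl⟩
    · rcases eq_or_ne k 0 with rfl | hk
      · exact le_rfl
      · exact le_of_lt (hσ.2 0 k (by exact Fin.pos_of_ne_zero hk))
    · rcases eq_or_ne k 0 with rfl | hk
      · exact le_of_lt (hσ.1 0)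
      · exact le_of_lt (lt_trans (hσ.2 0 k (Fin.pos_of_ne_zero hk)) (hσ.1 k))
  have := hle (σ.symm 0)
  rw [Equiv.apply_symm_apply] at this
  exact le_antisymm this (Fin.zero_le _)

lemma pfaff_pos {σ : Perm (Fin (N))} (hσ : σ ∈ pfaffPerms (n)) (k : Fin (n)) (hk : k ≠ 0) :
    σ (ii k) ≠ 0 := by
  rw [← pfaff_apply_zero m hσ]
  intro h
  exact hk (ii_inj (σ.injective h))

lemma step1_lt {σ : Perm (Fin (N))} (hσ : σ ∈ pfaffPerms (n)) (k : Fin (n)) :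
    step1 m σ (ii k) < step1 m σ (jj k) := by
  have h := (mem_pfaff.mp hσ).1
  rcases eq_or_ne k 0 with rfl | hk
  · rw [step1_ii_zero, step1_jj_zero, pfaff_apply_zero m hσ, neg_zero]
    apply neg_pos_of_ne_zero
    rw [← pfaff_apply_zero m hσ]
    intro hh
    have := σ.injective hh
    simp [ii, jj, Fin.ext_iff] at this
  · rw [step1_ii m σ k hk, step1_jj m σ k hk]
    have hzero : σ (ii k) ≠ 0 := pfaff_pos m hσ k hk
    exact neg_lt_neg_of_lt m hzero (h k)

lemma sign_step1 {σ : Perm (Fin (N))} : sign (step1 m σ) = sign σ := by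
  rw [step1, map_mul, map_mul, sign_hyper, prod_sign_uW, sign_negP]
  rcases Int.units_eq_one_or (sign σ) with h | h <;>
    rcases neg_one_pow_eq_or ℤˣ m with h2 | h2 <;> rw [h, h2] <;> decide

lemma sign_Φ {σ : Perm (Fin (N))} : sign (Φ m σ) = sign σ := by
  rw [Φ, map_mul, sign_hyper, sign_step1]
  simp

lemma Φ_mem {σ : Perm (Fin (N))} (hσ : σ ∈ pfaffPerms (n)) : Φ m σ ∈ pfaffPerms (n) := by
  rw [mem_pfaff]
  set f := Tuple.sort (fun k => step1 m σ (ii k)) with hf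
  constructor
  · intro k
    rw [Φ_ii, Φ_jj]
    exact step1_lt m hσ (f k)
  · intro k l hkl
    rw [Φ_ii, Φ_ii]
    have hmono : Monotone ((fun k => step1 m σ (ii k)) ∘ f) := Tuple.monotone_sort _
    have hinj : Function.Injective ((fun k => step1 m σ (ii k)) ∘ f) :=
      ((step1 m σ).injective.comp ii_inj).comp f.injective
    exact hmono.strictMono_of_injective hinj hkl

lemma Φ_pairs {σ : Perm (Fin (N))} (hσ : σ ∈ pfaffPerms (n)) (k : Fin (n)) :
    s(Φ m σ (ii k), Φ m σ (jj k)) =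
      Sym2.map (fun x => -x)
        (s(σ (ii (Tuple.sort (fun k => step1 m σ (ii k)) k)),
                  σ (jj (Tuple.sort (fun k => step1 m σ (ii k)) k)))) := by
  rw [Φ_ii, Φ_jj, Sym2.map_pair_eq]
  set l := Tuple.sort (fun k => step1 m σ (ii k)) k
  rcases eq_or_ne l 0 with hl | hl
  · rw [hl, step1_ii_zero, step1_jj_zero]
  · rw [step1_ii m σ l hl, step1_jj m σ l hl, Sym2.eq_swap]

/-- A Pfaff permutation is determined by its matching. -/
lemma pfaff_ext {σ σ' : Perm (Fin (N))} (hσ : σ ∈ pfaffPerms (n)) (hσ' : σ' ∈ pfaffPerms (n))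
    (g : Perm (Fin (n)))
    (h : ∀ k, s(σ' (ii k), σ' (jj k)) = s(σ (ii (g k)), σ (jj (g k)))) :
    σ' = σ := by
  rw [mem_pfaff] at hσ hσ'
  have key : ∀ k, σ' (ii k) = σ (ii (g k)) ∧ σ' (jj k) = σ (jj (g k)) := by
    intro k
    rcases Sym2.eq_iff.mp (h k) with ⟨h1, h2⟩ | ⟨h1, h2⟩
    · exact ⟨h1, h2⟩
    · exfalso
      have := hσ'.1 k
      rw [h1, h2] at this
      exact absurd (hσ.1 (g k)) (not_lt_of_gt this)
  have hgmono : StrictMono g := by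
    intro k l hkl
    have := hσ'.2 k l hkl
    rw [(key k).1, (key l).1] at this
    by_contra hle
    rcases eq_or_lt_of_le (not_lt.mp hle) with heq | hlt
    · rw [← heq] at this; exact lt_irrefl _ this
    · exact absurd (hσ.2 _ _ hlt) (not_lt_of_gt this)
  have hwf : WellFoundedLT (Fin (m+1)) := inferInstance
  have hg : ⇑g = id :=
    (@StrictMono.range_inj (Fin (m+1)) (Fin (m+1)) inferInstance inferInstance hwf ⇑g id
      hgmono strictMono_id).mp (by rw [g.surjective.range_eq, Set.range_id])
  have hgk : ∀ k, g k = k := fun k => congrFun hg k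
  ext x
  rcases exists_ii_jj x with ⟨k, rfl⟩ | ⟨k, rfl⟩
  · rw [(key k).1, hgk]
  · rw [(key k).2, hgk]

lemma neg_neg_fin (x : Fin (N)) : -(-x) = x := neg_neg x

lemma Φ_invol {σ : Perm (Fin (N))} (hσ : σ ∈ pfaffPerms (n)) : Φ m (Φ m σ) = σ := by
  have h1 := Φ_mem m hσ
  have h2 := Φ_mem m h1
  set f₁ := Tuple.sort (fun k => step1 m σ (ii k))
  set f₂ := Tuple.sort (fun k => step1 m (Φ m σ) (ii k))
  apply pfaff_ext m hσ h2 (f₂.trans f₁)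
  intro k
  rw [Φ_pairs m h1 k]
  rw [Φ_pairs m hσ (f₂ k)]
  rw [Sym2.map_map]
  have hid : ((fun x : Fin (N) => -x) ∘ fun x => -x) = id := funext fun x => neg_neg x
  rw [hid, Sym2.map_id, id_eq]
  rfl

lemma pfPoly_eq : pfPoly (n) K =
    ∑ σ ∈ pfaffPerms (n),
      ((Equiv.Perm.sign σ : ℤ) : MvPolynomial (Sym2 (Fin (N))) K) *
        ∏ k : Fin (n), X (s(σ (ii k), σ (jj k))) := rfl

end Main

end PfRefl

/-- The Pfaffian polynomial of symmetric indeterminates is invariant under the reflection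
`τ` fixing `1` and sending `i ↦ 2n+2-i` (in 0-based cyclic notation, `i ↦ -i (mod 2n)`,
i.e. negation on `Fin (2n)`), acting by `τ · a i j = a (τ⁻¹ i) (τ⁻¹ j)`. -/
theorem pfPoly_reflection_invariant (m : ℕ) (K : Type*) [CommRing K] :
    rename (Sym2.map ⇑((Equiv.neg (Fin (2*(m+1)))) : Equiv.Perm (Fin (2*(m+1))))⁻¹)
        (pfPoly (m+1) K) = pfPoly (m+1) K := by
  open PfRefl in
  have hcoe : ⇑((Equiv.neg (Fin (2*(m+1)))) : Equiv.Perm (Fin (2*(m+1))))⁻¹ =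
      fun x : Fin (2*(m+1)) => -x := by
    rw [show ((Equiv.neg (Fin (2*(m+1)))) : Equiv.Perm (Fin (2*(m+1))))⁻¹ =
      (Equiv.neg (Fin (2*(m+1)))).symm from rfl, Equiv.neg_symm]
    rfl
  rw [hcoe, pfPoly_eq, map_sum]
  refine Finset.sum_nbij' (PfRefl.Φ m) (PfRefl.Φ m) (fun σ hσ => PfRefl.Φ_mem m hσ)
    (fun σ hσ => PfRefl.Φ_mem m hσ) (fun σ hσ => PfRefl.Φ_invol m hσ)
    (fun σ hσ => PfRefl.Φ_invol m hσ) ?_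
  intro σ hσ
  rw [map_mul]
  congr 1
  · rw [show ((Equiv.Perm.sign σ : ℤ) : MvPolynomial (Sym2 (Fin (2*(m+1)))) K) =
      ((Equiv.Perm.sign σ : ℤ) : ℤ) • (1 : MvPolynomial (Sym2 (Fin (2*(m+1)))) K) by simp]
    rw [show ((Equiv.Perm.sign (PfRefl.Φ m σ) : ℤ) : MvPolynomial (Sym2 (Fin (2*(m+1)))) K) =
      ((Equiv.Perm.sign (PfRefl.Φ m σ) : ℤ) : ℤ) • (1 : MvPolynomial (Sym2 (Fin (2*(m+1)))) K) by
        simp]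
    rw [PfRefl.sign_Φ]
    simp
  · rw [map_prod]
    simp only [rename_X]
    rw [show (∏ k : Fin (m+1),
        X (R := K) (Sym2.map (fun x : Fin (2*(m+1)) => -x) (s(σ (PfRefl.ii k), σ (PfRefl.jj k))))) =
      ∏ k : Fin (m+1), (fun l => X (R := K)
        (Sym2.map (fun x : Fin (2*(m+1)) => -x) (s(σ (PfRefl.ii l), σ (PfRefl.jj l)))))
        ((Tuple.sort (fun k => PfRefl.step1 m σ (PfRefl.ii k))) k) from
      (Equiv.prod_comp _ _).symm]
    refine Finset.prod_congr rfl fun k _ => ?_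
    rw [PfRefl.Φ_pairs m hσ k]
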